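/- (Lower Comparison Lemma) Let H(n,k,g) = k + (n-k+1)·g(n) + Σ_{i=n-k+1}^{n} g(i). Let s : ℕ → ℝ satisfy s(1) = 1 and s(n+1) = (1/(n+1)) max_{1≤k≤n} H(n,k,s) for n ≥ 1. Suppose g : ℕ → ℝ and δ : ℕ → ℝ≥0 satisfy g(1) − δ(1) ≤ 1 and g(n+1) − δ(n+1) ≤ (1/(n+1)) max_{1≤k≤n} H(n,k,g) for all n ≥ 1. Then g(n) − Σ_{i=1}^{n} δ(i) ≤ s(n) for all n ≥ 1. -/

import Mathlib

open Finset

/-- `H n k g = k + (n-k+1) g(n) + ∑_{i=n-k+1}^{n} g(i)`. -/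
noncomputable def H (g : ℕ → ℝ) (n k : ℕ) : ℝ :=
  (k : ℝ) + ((n : ℝ) - (k : ℝ) + 1) * g n + ∑ i ∈ Finset.Icc (n - k + 1) n, g i

/-- `max_{1 ≤ k ≤ n} H(n,k,g)` for `n ≥ 1`. -/
noncomputable def maxH (g : ℕ → ℝ) (n : ℕ) (hn : 1 ≤ n) : ℝ :=
  (Finset.Icc 1 n).sup' (Finset.nonempty_Icc.mpr hn) (fun k => H g n k)

/-!
Write `D n = δ 1 + ⋯ + δ n`. Both `H n k` and `maxH n` are monotone in `g` and shift by exactly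
`(n + 1) c` when `g` is shifted by a constant `c`. Hence, by induction on `n`, the bound
`g i ≤ s i + D n` for all `1 ≤ i ≤ n` propagates from `n` to `n + 1`: dividing the recursion
by `n + 1` turns the shift `(n + 1) D n` back into `D n`, and the defect `δ (n + 1)` is added.
-/

theorem H_mono {f g : ℕ → ℝ} {n k : ℕ} (hk : k ∈ Icc 1 n) (hgf : ∀ i ∈ Icc 1 n, g i ≤ f i) :
    H g n k ≤ H f n k := by
  rw [mem_Icc] at hk
  have hcoef : (0 : ℝ) ≤ n - k + 1 := by
    have : (k : ℝ) ≤ n := by exact_mod_cast hk.2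
    linarith
  have hsum : ∑ i ∈ Icc (n - k + 1) n, g i ≤ ∑ i ∈ Icc (n - k + 1) n, f i :=
    sum_le_sum fun i hi => hgf i (Icc_subset_Icc_left (by omega) hi)
  have hlast : g n ≤ f n := hgf n (mem_Icc.mpr ⟨by omega, le_rfl⟩)
  unfold H
  gcongr

theorem H_add_const (g : ℕ → ℝ) (c : ℝ) {n k : ℕ} (hk : k ≤ n) :
    H (fun i => g i + c) n k = H g n k + (n + 1) * c := by
  have hcard : (Icc (n - k + 1) n).card = k := by rw [Nat.card_Icc]; omega
  simp only [H, sum_add_distrib, sum_const, hcard, nsmul_eq_mul]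
  ring

theorem maxH_mono {f g : ℕ → ℝ} {n : ℕ} (hn : 1 ≤ n) (hgf : ∀ i ∈ Icc 1 n, g i ≤ f i) :
    maxH g n hn ≤ maxH f n hn :=
  sup'_le _ _ fun _ hk => (H_mono hk hgf).trans (le_sup' (fun k => H f n k) hk)

theorem maxH_add_const (g : ℕ → ℝ) (c : ℝ) {n : ℕ} (hn : 1 ≤ n) :
    maxH (fun i => g i + c) n hn = maxH g n hn + (n + 1) * c := by
  rw [maxH, maxH, sup'_add]
  exact sup'_congr _ rfl fun _ hk => H_add_const g c (mem_Icc.mp hk).2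

theorem scaled_maxH_le_of_le_add {f g : ℕ → ℝ} {n : ℕ} (hn : 1 ≤ n) {c : ℝ}
    (hgf : ∀ i ∈ Icc 1 n, g i ≤ f i + c) :
    1 / ((n : ℝ) + 1) * maxH g n hn ≤ 1 / ((n : ℝ) + 1) * maxH f n hn + c := by
  have hmax : maxH g n hn ≤ maxH f n hn + (n + 1) * c :=
    maxH_add_const f c hn ▸ maxH_mono hn hgf
  have hpos : (0 : ℝ) < n + 1 := by positivity
  calc 1 / ((n : ℝ) + 1) * maxH g n hn
      ≤ 1 / ((n : ℝ) + 1) * (maxH f n hn + (n + 1) * c) := by gcongr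
    _ = 1 / ((n : ℝ) + 1) * maxH f n hn + c := by field_simp

/-- Lower comparison lemma. -/
theorem stmt_4 (s g : ℕ → ℝ) (δ : ℕ → ℝ) (hδ : ∀ i, 0 ≤ δ i)
    (h1 : s 1 = 1)
    (hrec : ∀ n : ℕ, ∀ hn : 1 ≤ n, s (n + 1) = (1 / ((n : ℝ) + 1)) * maxH s n hn)
    (hg1 : g 1 - δ 1 ≤ 1)
    (hg : ∀ n : ℕ, ∀ hn : 1 ≤ n, g (n + 1) - δ (n + 1) ≤ (1 / ((n : ℝ) + 1)) * maxH g n hn) :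
    ∀ n : ℕ, 1 ≤ n → g n - ∑ i ∈ Finset.Icc 1 n, δ i ≤ s n := by
  set D : ℕ → ℝ := fun n => ∑ i ∈ Icc 1 n, δ i
  have hD_succ (n : ℕ) : D (n + 1) = D n + δ (n + 1) := sum_Icc_succ_top (by omega) δ
  suffices h : ∀ n, 1 ≤ n → ∀ i ∈ Icc 1 n, g i ≤ s i + D n from
    fun n hn => by linarith [h n hn n (mem_Icc.mpr ⟨hn, le_rfl⟩)]
  intro n hn
  induction n, hn using Nat.le_induction with
  | base =>
    intro i hi
    obtain rfl : i = 1 := by simpa using hi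
    simp only [D, Icc_self, sum_singleton]
    linarith
  | succ n hn ih =>
    intro i hi
    rcases (mem_Icc.mp hi).2.lt_or_eq with hi_lt | rfl
    · linarith [ih i (mem_Icc.mpr ⟨(mem_Icc.mp hi).1, by omega⟩), hD_succ n, hδ (n + 1)]
    · linarith [hg n hn, hrec n hn, scaled_maxH_le_of_le_add hn ih, hD_succ n]
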